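/- arXiv:1103.2545 — 2 statements merged into one kernel-verified Lean document; each statement's English description precedes it below -/
import Mathlib

section
/- Let (A,B,C,D) be jointly distributed random variables on finite sets with joint pmf p such that I(A:B|C) = 0 and H(C|A,B) = 0. Then 0 ≤ H(A,D) + H(B,D) + H(C,D) − H(A,C,D) − H(B,C,D) − H(D). -/
open scoped BigOperators Classical

noncomputable section

/-- `p` is a probability mass function on the finite type `Ω`. -/
def IsPMF {Ω : Type*} [Fintype Ω] (p : Ω → ℝ) : Prop :=
  (∀ ω, 0 ≤ p ω) ∧ ∑ ω, p ω = 1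

/-- Probability of the event `X = s` under `p`. -/
def prOf {Ω S : Type*} [Fintype Ω] [DecidableEq S] (p : Ω → ℝ) (X : Ω → S) (s : S) : ℝ :=
  ∑ ω ∈ Finset.univ.filter (fun ω => X ω = s), p ω

/-- Shannon entropy (in bits) of the random variable `X` under the pmf `p`. -/
def ent {Ω S : Type*} [Fintype Ω] [Fintype S] [DecidableEq S] (p : Ω → ℝ) (X : Ω → S) : ℝ :=
  - ∑ s : S, prOf p X s * Real.logb 2 (prOf p X s)

/-- Mutual information `I(X:Y) = H(X) + H(Y) - H(X,Y)`. -/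
def mi {Ω S T : Type*} [Fintype Ω] [Fintype S] [Fintype T] [DecidableEq S] [DecidableEq T]
    (p : Ω → ℝ) (X : Ω → S) (Y : Ω → T) : ℝ :=
  ent p X + ent p Y - ent p (fun ω => (X ω, Y ω))

/-- Conditional mutual information `I(X:Y|Z) = H(X,Z) + H(Y,Z) - H(X,Y,Z) - H(Z)`. -/
def cmi {Ω S T U : Type*} [Fintype Ω] [Fintype S] [Fintype T] [Fintype U]
    [DecidableEq S] [DecidableEq T] [DecidableEq U]
    (p : Ω → ℝ) (X : Ω → S) (Y : Ω → T) (Z : Ω → U) : ℝ :=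
  ent p (fun ω => (X ω, Z ω)) + ent p (fun ω => (Y ω, Z ω))
    - ent p (fun ω => (X ω, Y ω, Z ω)) - ent p Z

/-- Conditional entropy `H(X|Y) = H(X,Y) - H(Y)`. -/
def condEnt {Ω S T : Type*} [Fintype Ω] [Fintype S] [Fintype T] [DecidableEq S] [DecidableEq T]
    (p : Ω → ℝ) (X : Ω → S) (Y : Ω → T) : ℝ :=
  ent p (fun ω => (X ω, Y ω)) - ent p Y

/-- The four coordinate random variables on `Bool × Bool × Bool × Bool`. -/
def vA : Bool × Bool × Bool × Bool → Bool := fun ω => ω.1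
def vB : Bool × Bool × Bool × Bool → Bool := fun ω => ω.2.1
def vC : Bool × Bool × Bool × Bool → Bool := fun ω => ω.2.2.1
def vD : Bool × Bool × Bool × Bool → Bool := fun ω => ω.2.2.2

/-!
Let `P` be the joint law of `(A, B, C, D)` and glue its `(A, C, D)`- and `(B, C, D)`-marginals
into `p̃(a,b,c,d) = P(a,c,d) P(b,c,d) / P(c,d)`; compare it with
`p̂(a,b,c,d) = P(a,d) P(b,d) / P(d)`, restricted to the `(a, b, c)` in the support of `(A, B, C)`.
Since `p̃` has the same `(A, C, D)`- and `(B, C, D)`-marginals as `P`, the right-hand side times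
`log 2` equals `∑ p̃ log (p̃ / p̂)`, which Gibbs' inequality bounds below by `∑ p̃ - ∑ p̂`.
Here `∑ p̃ = 1`, and `∑ p̂ ≤ 1` because `H(C | A, B) = 0` leaves at most one `c` for each `(a, b)`.
Gibbs' inequality needs `p̂ > 0` wherever `p̃ > 0`: this is where `I(A:B|C) = 0` enters, through
the equality case of Gibbs' inequality, which makes the law of `(A, B, C)` positive wherever
`P(a,c) P(b,c) > 0`.
-/

open Real InformationTheory Finset

section Marginals

variable {Ω S T U : Type*} [Fintype Ω] [DecidableEq S] [DecidableEq T] [DecidableEq U]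
  {p : Ω → ℝ}

lemma sum_prOf_mul [Fintype S] (X : Ω → S) (φ : S → ℝ) :
    ∑ s, prOf p X s * φ s = ∑ ω, p ω * φ (X ω) := by
  simp_rw [prOf, sum_mul]
  rw [← sum_fiberwise univ X fun ω => p ω * φ (X ω)]
  refine sum_congr rfl fun s _ => sum_congr rfl fun ω hω => ?_
  rw [(mem_filter.1 hω).2]

lemma ent_eq_neg_sum_mul_log [Fintype S] (X : Ω → S) :
    ent p X = -(∑ ω, p ω * log (prOf p X (X ω))) / log 2 := by
  rw [← sum_prOf_mul X fun s => log (prOf p X s), ent, neg_div, sum_div]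
  simp_rw [logb, mul_div_assoc]

lemma prOf_nonneg (hp : ∀ ω, 0 ≤ p ω) (X : Ω → S) (s : S) : 0 ≤ prOf p X s :=
  sum_nonneg fun ω _ => hp ω

lemma prOf_le_prOf (hp : ∀ ω, 0 ≤ p ω) {X : Ω → S} {Y : Ω → T} {s : S} {t : T}
    (h : ∀ ω, X ω = s → Y ω = t) : prOf p X s ≤ prOf p Y t :=
  sum_le_sum_of_subset_of_nonneg (monotone_filter_right _ fun ω _ => h ω) fun ω _ _ => hp ω

lemma sum_prOf [Fintype S] (hp : IsPMF p) (X : Ω → S) : ∑ s, prOf p X s = 1 := by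
  simpa only [prOf, sum_fiberwise] using hp.2

lemma sum_prOf_pair_left [Fintype S] (X : Ω → S) (Y : Ω → T) (t : T) :
    ∑ s, prOf p (fun ω => (X ω, Y ω)) (s, t) = prOf p Y t := by
  unfold prOf
  rw [← sum_fiberwise (univ.filter fun ω => Y ω = t) X p]
  simp only [filter_filter, Prod.mk.injEq, and_comm]

lemma prOf_pair_le_right (hp : ∀ ω, 0 ≤ p ω) (X : Ω → S) (Y : Ω → T) (s : S) (t : T) :
    prOf p (fun ω => (X ω, Y ω)) (s, t) ≤ prOf p Y t :=
  prOf_le_prOf hp fun _ h => (Prod.mk.inj h).2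

/-- The law of `(X, Y, Z)` obtained by gluing the laws of `(X, Z)` and `(Y, Z)` along `Z`, i.e.
making `X` and `Y` conditionally independent given `Z`. -/
def condIndepLaw (p : Ω → ℝ) (X : Ω → S) (Y : Ω → T) (Z : Ω → U)
    (x : S) (y : T) (z : U) : ℝ :=
  prOf p (fun ω => (X ω, Z ω)) (x, z) * prOf p (fun ω => (Y ω, Z ω)) (y, z) / prOf p Z z

variable (X : Ω → S) (Y : Ω → T) (Z : Ω → U)

lemma condIndepLaw_nonneg (hp : ∀ ω, 0 ≤ p ω) (x : S) (y : T) (z : U) :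
    0 ≤ condIndepLaw p X Y Z x y z :=
  div_nonneg (mul_nonneg (prOf_nonneg hp _ _) (prOf_nonneg hp _ _)) (prOf_nonneg hp _ _)

lemma condIndepLaw_pos_iff (hp : ∀ ω, 0 ≤ p ω) (x : S) (y : T) (z : U) :
    0 < condIndepLaw p X Y Z x y z ↔
      0 < prOf p (fun ω => (X ω, Z ω)) (x, z) ∧
      0 < prOf p (fun ω => (Y ω, Z ω)) (y, z) := by
  have hxz := prOf_nonneg hp (fun ω => (X ω, Z ω)) (x, z)
  have hyz := prOf_nonneg hp (fun ω => (Y ω, Z ω)) (y, z)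
  refine ⟨fun h => ?_, fun ⟨hx, hy⟩ => ?_⟩
  · have hne := h.ne'
    rw [condIndepLaw, div_ne_zero_iff, mul_ne_zero_iff] at hne
    exact ⟨hxz.lt_of_ne' hne.1.1, hyz.lt_of_ne' hne.1.2⟩
  · exact div_pos (mul_pos hx hy) (hx.trans_le (prOf_pair_le_right hp X Z x z))

lemma log_condIndepLaw (hp : ∀ ω, 0 ≤ p ω) {x : S} {y : T} {z : U}
    (hx : 0 < prOf p (fun ω => (X ω, Z ω)) (x, z))
    (hy : 0 < prOf p (fun ω => (Y ω, Z ω)) (y, z)) :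
    log (condIndepLaw p X Y Z x y z) = log (prOf p (fun ω => (X ω, Z ω)) (x, z))
      + log (prOf p (fun ω => (Y ω, Z ω)) (y, z)) - log (prOf p Z z) := by
  have hz := hx.trans_le (prOf_pair_le_right hp X Z x z)
  rw [condIndepLaw, log_div (mul_pos hx hy).ne' hz.ne', log_mul hx.ne' hy.ne']

lemma sum_condIndepLaw_right [Fintype T] (hp : ∀ ω, 0 ≤ p ω) (x : S) (z : U) :
    ∑ y, condIndepLaw p X Y Z x y z = prOf p (fun ω => (X ω, Z ω)) (x, z) := by
  simp_rw [condIndepLaw, ← sum_div, ← mul_sum, sum_prOf_pair_left]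
  rcases (prOf_nonneg hp Z z).eq_or_lt with hz | hz
  · have := prOf_pair_le_right hp X Z x z
    rw [← hz, mul_zero, div_zero] at *
    linarith [prOf_nonneg hp (fun ω => (X ω, Z ω)) (x, z)]
  · exact mul_div_cancel_right₀ _ hz.ne'

lemma sum_condIndepLaw_left [Fintype S] (hp : ∀ ω, 0 ≤ p ω) (y : T) (z : U) :
    ∑ x, condIndepLaw p X Y Z x y z = prOf p (fun ω => (Y ω, Z ω)) (y, z) := by
  simp_rw [condIndepLaw, mul_comm (prOf p (fun ω => (X ω, Z ω)) _)]
  exact sum_condIndepLaw_right Y X Z hp y z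

lemma sum_condIndepLaw [Fintype S] [Fintype T] [Fintype U] (hp : IsPMF p) :
    ∑ x, ∑ y, ∑ z, condIndepLaw p X Y Z x y z = 1 := by
  have hxz (x : S) :
      ∑ y, ∑ z, condIndepLaw p X Y Z x y z = ∑ z, prOf p (fun ω => (X ω, Z ω)) (x, z) := by
    rw [sum_comm]
    simp_rw [sum_condIndepLaw_right X Y Z hp.1]
  simp_rw [hxz]
  rw [sum_comm]
  simp_rw [sum_prOf_pair_left]
  exact sum_prOf hp Z

lemma sum_condIndepLaw_mul_add [Fintype S] [Fintype T] [Fintype U] (hp : ∀ ω, 0 ≤ p ω)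
    (F : S → U → ℝ) (G : T → U → ℝ) :
    ∑ x, ∑ y, ∑ z, condIndepLaw p X Y Z x y z * (F x z + G y z)
      = ∑ ω, p ω * (F (X ω) (Z ω) + G (Y ω) (Z ω)) := by
  have hF :
      ∑ x, ∑ y, ∑ z, condIndepLaw p X Y Z x y z * F x z = ∑ ω, p ω * F (X ω) (Z ω) := by
    calc _ = ∑ x, ∑ z, prOf p (fun ω => (X ω, Z ω)) (x, z) * F x z := by
          refine sum_congr rfl fun x _ => ?_
          rw [sum_comm]
          simp_rw [← sum_mul, sum_condIndepLaw_right X Y Z hp]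
      _ = _ := by
          rw [← Fintype.sum_prod_type']
          exact sum_prOf_mul _ fun s : S × U => F s.1 s.2
  have hG :
      ∑ x, ∑ y, ∑ z, condIndepLaw p X Y Z x y z * G y z = ∑ ω, p ω * G (Y ω) (Z ω) := by
    calc _ = ∑ y, ∑ z, prOf p (fun ω => (Y ω, Z ω)) (y, z) * G y z := by
          rw [sum_comm]
          refine sum_congr rfl fun y _ => ?_
          rw [sum_comm]
          simp_rw [← sum_mul, sum_condIndepLaw_left X Y Z hp]
      _ = _ := by
          rw [← Fintype.sum_prod_type']
          exact sum_prOf_mul _ fun s : T × U => G s.1 s.2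
  simp only [mul_add, sum_add_distrib, hF, hG]

end Marginals

section Gibbs

variable {ι : Type*} [Fintype ι] {f g : ι → ℝ}

lemma mul_log_div_eq_sub_add_mul_klFun {a b : ℝ} (ha : 0 ≤ a) (hb : 0 ≤ b)
    (hab : 0 < a → 0 < b) :
    a * log (a / b) = a - b + b * klFun (a / b) := by
  rcases hb.eq_or_lt with rfl | hb
  · obtain rfl : a = 0 := le_antisymm (not_lt.1 fun h => (hab h).false) ha
    simp
  · rw [klFun_apply]
    field_simp
    ring

lemma sum_mul_log_div_eq (hf : ∀ i, 0 ≤ f i) (hg : ∀ i, 0 ≤ g i)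
    (hfg : ∀ i, 0 < f i → 0 < g i) :
    ∑ i, f i * log (f i / g i) = ∑ i, f i - ∑ i, g i + ∑ i, g i * klFun (f i / g i) := by
  simp_rw [mul_log_div_eq_sub_add_mul_klFun (hf _) (hg _) (hfg _), sum_add_distrib, sum_sub_distrib]

theorem sum_sub_sum_le_sum_mul_log_div (hf : ∀ i, 0 ≤ f i) (hg : ∀ i, 0 ≤ g i)
    (hfg : ∀ i, 0 < f i → 0 < g i) :
    ∑ i, f i - ∑ i, g i ≤ ∑ i, f i * log (f i / g i) := by
  rw [sum_mul_log_div_eq hf hg hfg, le_add_iff_nonneg_right]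
  exact sum_nonneg fun i _ => mul_nonneg (hg i) (klFun_nonneg (div_nonneg (hf i) (hg i)))

theorem eq_of_sum_mul_log_div_eq (hf : ∀ i, 0 ≤ f i) (hg : ∀ i, 0 ≤ g i)
    (hfg : ∀ i, 0 < f i → 0 < g i) (h : ∑ i, f i * log (f i / g i) = ∑ i, f i - ∑ i, g i)
    {i : ι} (hi : 0 < g i) : f i = g i := by
  rw [sum_mul_log_div_eq hf hg hfg, add_eq_left] at h
  have hkl := (sum_eq_zero_iff_of_nonneg fun j _ =>
    mul_nonneg (hg j) (klFun_nonneg (div_nonneg (hf j) (hg j)))).1 h i (mem_univ i)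
  rw [mul_eq_zero, klFun_eq_zero_iff (div_nonneg (hf i) (hg i)), div_eq_one_iff_eq hi.ne'] at hkl
  exact hkl.resolve_left hi.ne'

end Gibbs

section Support

variable {Ω S T U : Type*} [Fintype Ω] [Fintype S] [Fintype T] [Fintype U]
  [DecidableEq S] [DecidableEq T] [DecidableEq U] {p : Ω → ℝ}

theorem prOf_pos_of_cmi_eq_zero (hp : IsPMF p) (X : Ω → S) (Y : Ω → T) (Z : Ω → U)
    (h : cmi p X Y Z = 0) {x : S} {y : T} {z : U}
    (hx : 0 < prOf p (fun ω => (X ω, Z ω)) (x, z))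
    (hy : 0 < prOf p (fun ω => (Y ω, Z ω)) (y, z)) :
    0 < prOf p (fun ω => (X ω, Y ω, Z ω)) (x, y, z) := by
  set Q := prOf p (fun ω => (X ω, Y ω, Z ω))
  set R : S × T × U → ℝ := fun s => condIndepLaw p X Y Z s.1 s.2.1 s.2.2
  have hQR (s) (hs : 0 < Q s) : 0 < R s := by
    refine (condIndepLaw_pos_iff X Y Z hp.1 _ _ _).2 ⟨hs.trans_le ?_, hs.trans_le ?_⟩ <;>
      exact prOf_le_prOf hp.1 fun ω h => by subst h; rfl
  have hQ1 : ∑ s, Q s = 1 := sum_prOf hp _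
  have hR1 : ∑ s, R s = 1 := by
    simpa only [R, Fintype.sum_prod_type] using sum_condIndepLaw X Y Z hp
  -- `cmi p X Y Z * log 2` is the divergence of `R` from `Q`, so Gibbs' inequality is tight.
  have hkl : ∑ s, Q s * log (Q s / R s) = 0 := by
    have hterm (s : S × T × U) : Q s * log (Q s / R s) = Q s * (log (Q s) + log (prOf p Z s.2.2)
        - log (prOf p (fun ω => (X ω, Z ω)) (s.1, s.2.2))
        - log (prOf p (fun ω => (Y ω, Z ω)) (s.2.1, s.2.2))) := by
      obtain hs | hs : 0 = Q s ∨ 0 < Q s := (prOf_nonneg hp.1 _ s).eq_or_lt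
      · rw [← hs, zero_mul, zero_mul]
      · obtain ⟨hxz, hyz⟩ := (condIndepLaw_pos_iff X Y Z hp.1 _ _ _).1 (hQR s hs)
        rw [log_div hs.ne' (hQR s hs).ne', log_condIndepLaw X Y Z hp.1 hxz hyz]
        ring
    simp only [hterm, Q, sum_prOf_mul, mul_add, mul_sub, sum_add_distrib, sum_sub_distrib]
    simp only [cmi, ent_eq_neg_sum_mul_log] at h
    field_simp at h
    linarith
  have hR : 0 < R (x, y, z) := (condIndepLaw_pos_iff X Y Z hp.1 _ _ _).2 ⟨hx, hy⟩
  have hQR_eq := eq_of_sum_mul_log_div_eq (f := Q) (g := R) (prOf_nonneg hp.1 _)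
    (fun s => condIndepLaw_nonneg X Y Z hp.1 _ _ _) hQR (by rw [hkl, hQ1, hR1, sub_self]) hR
  exact hQR_eq ▸ hR

theorem eq_of_condEnt_eq_zero (hp : ∀ ω, 0 ≤ p ω) (Y : Ω → T) (X : Ω → S)
    (h : condEnt p Y X = 0) {y y' : T} {x : S}
    (hy : 0 < prOf p (fun ω => (Y ω, X ω)) (y, x))
    (hy' : 0 < prOf p (fun ω => (Y ω, X ω)) (y', x)) :
    y = y' := by
  set P := prOf p (fun ω => (Y ω, X ω))
  have hPX (s : T × S) : P s ≤ prOf p X s.2 := prOf_le_prOf hp fun ω h => by rw [← h]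
  have hterm (s : T × S) : 0 ≤ P s * (log (prOf p X s.2) - log (P s)) := by
    obtain hs | hs : 0 = P s ∨ 0 < P s := (prOf_nonneg hp _ s).eq_or_lt
    · rw [← hs, zero_mul]
    · exact mul_nonneg hs.le (sub_nonneg.2 (log_le_log hs (hPX s)))
  have hsum : ∑ s, P s * (log (prOf p X s.2) - log (P s)) = 0 := by
    simp only [P, sum_prOf_mul, mul_sub, sum_sub_distrib]
    simp only [condEnt, ent_eq_neg_sum_mul_log] at h
    field_simp at h
    linarith
  have hfull : P (y, x) = prOf p X x := by
    have := (sum_eq_zero_iff_of_nonneg fun s _ => hterm s).1 hsum (y, x) (mem_univ _)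
    rw [mul_eq_zero, sub_eq_zero] at this
    exact (log_injOn_pos (hy.trans_le (hPX _)) hy (this.resolve_left hy.ne')).symm
  by_contra hne
  have : P (y, x) + P (y', x) ≤ prOf p X x := by
    rw [← sum_prOf_pair_left Y X x, ← sum_pair (f := fun t => P (t, x)) hne]
    exact sum_le_sum_of_subset_of_nonneg (subset_univ _) fun _ _ _ => prOf_nonneg hp _ _
  linarith

end Support

lemma sum_ite_le_of_unique {ι : Type*} [Fintype ι] {E : ι → Prop} [DecidablePred E]
    (hE : ∀ i j, E i → E j → i = j) {w : ℝ} (hw : 0 ≤ w) :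
    ∑ i, (if E i then w else 0) ≤ w := by
  rw [← sum_filter, sum_const, nsmul_eq_mul]
  refine mul_le_of_le_one_left hw ?_
  exact_mod_cast card_le_one.2 fun i hi j hj => hE i j (mem_filter.1 hi).2 (mem_filter.1 hj).2

section Coupling

variable {Ω α β γ δ : Type*} [Fintype Ω] [DecidableEq α] [DecidableEq β] [DecidableEq γ]
  [DecidableEq δ] {p : Ω → ℝ} (A : Ω → α) (B : Ω → β) (C : Ω → γ) (D : Ω → δ)

lemma sum_ite_condIndepLaw_le_one [Fintype α] [Fintype β] [Fintype γ] [Fintype δ] (hp : IsPMF p)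
    (hdet : ∀ c c' a b, 0 < prOf p (fun ω => (C ω, A ω, B ω)) (c, a, b) →
      0 < prOf p (fun ω => (C ω, A ω, B ω)) (c', a, b) → c = c') :
    ∑ a, ∑ b, ∑ c, ∑ d, (if 0 < prOf p (fun ω => (C ω, A ω, B ω)) (c, a, b)
      then condIndepLaw p A B D a b d else 0) ≤ 1 := by
  calc _ = ∑ a, ∑ b, ∑ d, ∑ c, (if 0 < prOf p (fun ω => (C ω, A ω, B ω)) (c, a, b)
          then condIndepLaw p A B D a b d else 0) :=
        sum_congr rfl fun a _ => sum_congr rfl fun b _ => sum_comm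
    _ ≤ ∑ a, ∑ b, ∑ d, condIndepLaw p A B D a b d := by
        gcongr with a _ b _ d _
        exact sum_ite_le_of_unique (fun c c' => hdet c c' a b)
          (condIndepLaw_nonneg _ _ _ hp.1 _ _ _)
    _ = 1 := sum_condIndepLaw A B D hp

lemma pos_of_condIndepLaw_pos (hp : ∀ ω, 0 ≤ p ω)
    (hsupp : ∀ a b c, 0 < prOf p (fun ω => (A ω, C ω)) (a, c) →
      0 < prOf p (fun ω => (B ω, C ω)) (b, c) →
      0 < prOf p (fun ω => (A ω, B ω, C ω)) (a, b, c))
    {a : α} {b : β} {c : γ} {d : δ}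
    (h : 0 < condIndepLaw p A B (fun ω => (C ω, D ω)) a b (c, d)) :
    0 < prOf p (fun ω => (C ω, A ω, B ω)) (c, a, b) ∧ 0 < condIndepLaw p A B D a b d := by
  obtain ⟨hacd, hbcd⟩ := (condIndepLaw_pos_iff _ _ _ hp _ _ _).1 h
  have habc := hsupp a b c (hacd.trans_le (prOf_le_prOf hp fun ω h => by simp_all))
    (hbcd.trans_le (prOf_le_prOf hp fun ω h => by simp_all))
  refine ⟨habc.trans_le (prOf_le_prOf hp fun ω h => by simp_all),
    (condIndepLaw_pos_iff _ _ _ hp _ _ _).2 ⟨?_, ?_⟩⟩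
  exacts [hacd.trans_le (prOf_le_prOf hp fun ω h => by simp_all),
    hbcd.trans_le (prOf_le_prOf hp fun ω h => by simp_all)]

theorem kl_intermediate_inequality_of_support [Fintype α] [Fintype β] [Fintype γ] [Fintype δ]
    (hp : IsPMF p)
    (hsupp : ∀ a b c, 0 < prOf p (fun ω => (A ω, C ω)) (a, c) →
      0 < prOf p (fun ω => (B ω, C ω)) (b, c) →
      0 < prOf p (fun ω => (A ω, B ω, C ω)) (a, b, c))
    (hdet : ∀ c c' a b, 0 < prOf p (fun ω => (C ω, A ω, B ω)) (c, a, b) →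
      0 < prOf p (fun ω => (C ω, A ω, B ω)) (c', a, b) → c = c') :
    0 ≤ ent p (fun ω => (A ω, D ω)) + ent p (fun ω => (B ω, D ω))
        + ent p (fun ω => (C ω, D ω))
        - ent p (fun ω => (A ω, C ω, D ω)) - ent p (fun ω => (B ω, C ω, D ω))
        - ent p D := by
  set f : α × β × γ × δ → ℝ := fun s =>
    condIndepLaw p A B (fun ω => (C ω, D ω)) s.1 s.2.1 s.2.2
  set g : α × β × γ × δ → ℝ := fun s =>
    if 0 < prOf p (fun ω => (C ω, A ω, B ω)) (s.2.2.1, s.1, s.2.1)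
    then condIndepLaw p A B D s.1 s.2.1 s.2.2.2 else 0
  have hf (s) : 0 ≤ f s := condIndepLaw_nonneg _ _ _ hp.1 _ _ _
  have hg (s) : 0 ≤ g s := by
    unfold g; split_ifs
    exacts [condIndepLaw_nonneg _ _ _ hp.1 _ _ _, le_rfl]
  have hpos (s) (hs : 0 < f s) := pos_of_condIndepLaw_pos A B C D hp.1 hsupp hs
  have hgf (s) (hs : 0 < f s) : g s = condIndepLaw p A B D s.1 s.2.1 s.2.2.2 := if_pos (hpos s hs).1
  have hfg (s) (hs : 0 < f s) : 0 < g s := hgf s hs ▸ (hpos s hs).2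
  have hf1 : ∑ s, f s = 1 := by
    rw [← sum_condIndepLaw A B (fun ω => (C ω, D ω)) hp]
    simp only [f, Fintype.sum_prod_type]
  have hg1 : ∑ s, g s ≤ 1 := by
    simpa only [g, Fintype.sum_prod_type] using sum_ite_condIndepLaw_le_one A B C D hp hdet
  set F : α → γ × δ → ℝ := fun a z => log (prOf p (fun ω => (A ω, C ω, D ω)) (a, z))
    - log (prOf p (fun ω => (C ω, D ω)) z) - log (prOf p (fun ω => (A ω, D ω)) (a, z.2))
    + log (prOf p D z.2)
  set G : β → γ × δ → ℝ := fun b z => log (prOf p (fun ω => (B ω, C ω, D ω)) (b, z))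
    - log (prOf p (fun ω => (B ω, D ω)) (b, z.2))
  have hterm (s) : f s * log (f s / g s) = f s * (F s.1 s.2.2 + G s.2.1 s.2.2) := by
    obtain hs | hs : 0 = f s ∨ 0 < f s := (hf s).eq_or_lt
    · rw [← hs, zero_mul, zero_mul]
    obtain ⟨hacd, hbcd⟩ := (condIndepLaw_pos_iff _ _ _ hp.1 _ _ _).1 hs
    obtain ⟨had, hbd⟩ := (condIndepLaw_pos_iff _ _ _ hp.1 _ _ _).1 (hpos s hs).2
    have hlogf : log (f s) = _ := log_condIndepLaw _ _ _ hp.1 hacd hbcd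
    have hlogg : log (g s) = _ := hgf s hs ▸ log_condIndepLaw _ _ _ hp.1 had hbd
    rw [log_div hs.ne' (hfg s hs).ne', hlogf, hlogg]
    ring
  have hKL : ∑ s, f s * log (f s / g s)
      = ∑ ω, p ω * (F (A ω) (C ω, D ω) + G (B ω) (C ω, D ω)) := by
    rw [← sum_condIndepLaw_mul_add A B (fun ω => (C ω, D ω)) hp.1 F G,
      sum_congr rfl fun s _ => hterm s]
    simp only [f, Fintype.sum_prod_type]
  have hN : 0 ≤ ∑ ω, p ω * (F (A ω) (C ω, D ω) + G (B ω) (C ω, D ω)) := by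
    linarith [sum_sub_sum_le_sum_mul_log_div hf hg hfg]
  refine (div_nonneg hN (log_nonneg one_le_two)).trans_eq ?_
  simp only [ent_eq_neg_sum_mul_log, F, G, mul_add, mul_sub, sum_add_distrib, sum_sub_distrib]
  ring

end Coupling

theorem kl_intermediate_inequality {Ω α β γ δ : Type*} [Fintype Ω] [Fintype α] [Fintype β] [Fintype γ] [Fintype δ]
    [DecidableEq α] [DecidableEq β] [DecidableEq γ] [DecidableEq δ]
    (p : Ω → ℝ) (hp : IsPMF p)
    (A : Ω → α) (B : Ω → β) (C : Ω → γ) (D : Ω → δ)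
    (h1 : cmi p A B C = 0) (h2 : condEnt p C (fun ω => (A ω, B ω)) = 0) :
    0 ≤ ent p (fun ω => (A ω, D ω)) + ent p (fun ω => (B ω, D ω))
        + ent p (fun ω => (C ω, D ω))
        - ent p (fun ω => (A ω, C ω, D ω)) - ent p (fun ω => (B ω, C ω, D ω))
        - ent p D :=
  kl_intermediate_inequality_of_support A B C D hp
    (fun _ _ _ => prOf_pos_of_cmi_eq_zero hp A B C h1)
    (fun _ _ _ _ => eq_of_condEnt_eq_zero hp.1 C (fun ω => (A ω, B ω)) h2)

end
end

section
/- For the family of binary distributions with P(A=0,B=0,C=0,D=0) = 3ε, P(A=1,B=1,C=0,D=0) = 1/3-ε, P(A=1,B=0,C=1,D=0) = 1/3-ε, P(A=0,B=1,C=0,D=1) = 1/3-ε, the quantity I(C:D) − I(A:B) − I(C:D|A) − I(C:D|B) − I(A:B|C) − I(B:D|C) equals −3ε·log₂(ε) + O(ε) as ε → 0⁺; in particular it is positive for all sufficiently small ε > 0. -/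
open scoped BigOperators Classical

noncomputable section

/-- The witness distribution of Theorem 3(c). -/
def p18 (ε : ℝ) : Bool × Bool × Bool × Bool → ℝ := fun ω =>
  if ω = (false, false, false, false) then 3 * ε
  else if ω = (true, true, false, false) then 1 / 3 - ε
  else if ω = (true, false, true, false) then 1 / 3 - ε
  else if ω = (false, true, false, true) then 1 / 3 - ε
  else 0

/-- The violation of Matúš's inequality for the distribution `p18 ε`. -/
def F18 (ε : ℝ) : ℝ :=
  mi (p18 ε) vC vD - mi (p18 ε) vA vB - cmi (p18 ε) vC vD vA
    - cmi (p18 ε) vC vD vB - cmi (p18 ε) vA vB vC - cmi (p18 ε) vB vD vC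

/-! With `η = negMulLog`, computing the entropies gives
`F18 ε · ln 2 = 4 (η(2/3+ε) - η(2/3-2ε)) - 5 (η(1/3+2ε) - η(1/3-ε)) + η(3ε)`.
On `[e⁻², 1]` the derivative `-ln x - 1` of `η` is bounded by `1` in absolute value, so both
differences are `O(ε)`, while `η(3ε) = -3ε ln 3 - 3ε ln ε` carries the dominant term. -/

open Real Set

lemma exp_neg_two_lt_quarter : exp (-2) < 1/4 := by
  have h : (-2 : ℝ) = -1 + -1 := by norm_num
  rw [h, exp_add]
  nlinarith [exp_neg_one_lt_d9, exp_pos (-1)]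

lemma abs_neg_log_sub_one_le_one {x : ℝ} (hx : x ∈ Icc (exp (-2)) 1) : |-log x - 1| ≤ 1 := by
  have hx₀ : 0 < x := (exp_pos _).trans_le hx.1
  have hlo : -2 ≤ log x := by simpa using log_le_log (exp_pos _) hx.1
  have hhi : log x ≤ 0 := log_nonpos hx₀.le hx.2
  rw [abs_le]; constructor <;> linarith

lemma abs_negMulLog_sub_le {x y : ℝ} (hx : x ∈ Icc (exp (-2)) 1) (hy : y ∈ Icc (exp (-2)) 1) :
    |negMulLog y - negMulLog x| ≤ |y - x| := by
  have hderiv : ∀ z ∈ Icc (exp (-2)) 1,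
      HasDerivWithinAt negMulLog (-log z - 1) (Icc (exp (-2)) 1) z :=
    fun z hz => (hasDerivAt_negMulLog ((exp_pos _).trans_le hz.1).ne').hasDerivWithinAt
  simpa using (convex_Icc _ _).norm_image_sub_le_of_norm_hasDerivWithin_le hderiv
    (fun z hz => abs_neg_log_sub_one_le_one hz) hx hy

lemma F18_mul_log_two (ε : ℝ) : F18 ε * log 2 =
    4 * (negMulLog (2/3 + ε) - negMulLog (2/3 - 2*ε))
      - 5 * (negMulLog (1/3 + 2*ε) - negMulLog (1/3 - ε)) + negMulLog (3*ε) := by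
  simp only [F18, mi, cmi, ent, prOf, Finset.sum_filter]
  simp only [Fintype.univ_bool, vC, p18, one_div, Fintype.sum_prod_type, Prod.mk.injEq,
    Finset.sum_ite_irrel, Finset.mem_singleton, Bool.true_eq_false, not_false_eq_true,
    Finset.sum_insert, and_false, ↓reduceIte, and_true, Finset.sum_singleton, Bool.false_eq_true,
    Finset.sum_const_zero, Finset.sum_ite_eq', Finset.mem_insert, Bool.eq_true_or_eq_false_self,
    true_and, false_and, zero_add, add_zero, logb, neg_add_rev, vD, Finset.mem_univ,
    ite_mul, zero_mul, vA, vB, ite_self, log_zero, zero_div, mul_zero,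
    negMulLog, neg_sub, neg_mul]
  field_simp
  ring_nf

lemma abs_F18_sub_le {ε : ℝ} (hε : 0 < ε) (hε' : ε ≤ 1/12) :
    |F18 ε - (-(3 * ε) * logb 2 ε)| ≤ 66 * ε := by
  have mem : ∀ x, 1/4 ≤ x → x ≤ 1 → x ∈ Icc (exp (-2)) 1 :=
    fun x h₁ h₂ => ⟨exp_neg_two_lt_quarter.le.trans h₁, h₂⟩
  have h₁ : |negMulLog (2/3 + ε) - negMulLog (2/3 - 2*ε)| ≤ 3 * ε :=
    (abs_negMulLog_sub_le (mem _ (by linarith) (by linarith))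
      (mem _ (by linarith) (by linarith))).trans
      (by rw [abs_of_pos (by linarith)]; linarith)
  have h₂ : |negMulLog (1/3 + 2*ε) - negMulLog (1/3 - ε)| ≤ 3 * ε :=
    (abs_negMulLog_sub_le (mem _ (by linarith) (by linarith))
      (mem _ (by linarith) (by linarith))).trans
      (by rw [abs_of_pos (by linarith)]; linarith)
  have h₃ : 0 ≤ 3 * ε * log 3 ∧ 3 * ε * log 3 ≤ 6 * ε := by
    have : log 3 ≤ 2 := by linarith [log_le_sub_one_of_pos (by norm_num : (0:ℝ) < 3)]
    constructor <;> nlinarith [log_nonneg (by norm_num : (1:ℝ) ≤ 3)]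
  have h3ε : negMulLog (3 * ε) = -(3 * ε) * (log 3 + log ε) := by
    rw [negMulLog, log_mul (by norm_num) hε.ne']
  have hnat : |(F18 ε - (-(3 * ε) * logb 2 ε)) * log 2| ≤ 33 * ε := by
    rw [sub_mul, F18_mul_log_two, h3ε, logb, mul_assoc,
      div_mul_cancel₀ _ (log_pos one_lt_two).ne']
    rw [abs_le] at h₁ h₂ ⊢
    constructor <;> linarith
  have hlog2 : 1/2 < log 2 := by linarith [log_two_gt_d9]
  rw [abs_mul, abs_of_pos (log_pos one_lt_two)] at hnat
  nlinarith [abs_nonneg (F18 ε - (-(3 * ε) * logb 2 ε))]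

theorem p18_asymptotics :
    ∃ K ε₀ : ℝ, 0 < K ∧ 0 < ε₀ ∧
      ∀ ε : ℝ, 0 < ε → ε < ε₀ →
        |F18 ε - (-(3 * ε) * Real.logb 2 ε)| ≤ K * ε ∧ 0 < F18 ε := by
  refine ⟨66, 2 ^ (-22 : ℝ), by norm_num, by positivity, fun ε hε hεε₀ => ?_⟩
  have hε' : ε ≤ 1/12 := hεε₀.le.trans (by rw [rpow_neg (by norm_num)]; norm_num)
  have hbound := abs_F18_sub_le hε hε'
  have hlog : logb 2 ε < -22 := (logb_lt_iff_lt_rpow (by norm_num) hε).2 hεε₀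
  refine ⟨hbound, ?_⟩
  nlinarith [(abs_le.1 hbound).1]

end
end
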